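/- All well-formed MAPD instances are solvable. Precisely: let G be a connected simple graph with vertex set V, let m ≥ 1 agents have pairwise-distinct initial locations a_1, …, a_m ∈ V, and let there be finitely many tasks j = 1, …, n, where task j has pickup location s_j ∈ V, delivery location g_j ∈ V, and release timestep r_j ∈ ℕ. Let Vtsk ⊆ V (the task endpoints) contain all s_j and g_j, let S ⊆ V (the non-task endpoints) be disjoint from Vtsk, let Ep = S ∪ Vtsk (the endpoints) contain all a_i, and assume: S is finite with |S| ≥ m, and for any two distinct x, y ∈ Ep there exists a walk in G from x to y whose support intersects Ep exactly in {x, y}. Then there exist plans p_1, …, p_m on G with p_i(0) = a_i for all i, such that the plans are pairwise non-colliding and every task is executed after its release: for every task j there exist an agent i and timesteps t1 ≤ t2 with r_j ≤ t1, p_i(t1) = s_j, and p_i(t2) = g_j. -/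
import Mathlib


/-- A plan on a simple graph `G`: at every timestep the agent stays or moves
along an edge. -/
def IsPlan {V : Type*} (G : SimpleGraph V) (p : ℕ → V) : Prop :=
  ∀ t : ℕ, p (t + 1) = p t ∨ G.Adj (p t) (p (t + 1))

/-- Two plans collide iff they have a vertex collision or an edge collision. -/
def Collide {V : Type*} (p q : ℕ → V) : Prop :=
  (∃ t : ℕ, p t = q t) ∨ (∃ t : ℕ, p t = q (t + 1) ∧ q t = p (t + 1))



lemma MAPD.collide_symm {V : Type*} {p q : ℕ → V} (h : Collide p q) : Collide q p := by
  rcases h with ⟨t, h⟩ | ⟨t, h1, h2⟩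
  · exact Or.inl ⟨t, h.symm⟩
  · exact Or.inr ⟨t, h2, h1⟩

lemma MAPD.update_inj {α β : Type*} [DecidableEq α] {c : α → β}
    (hc : Function.Injective c) {i0 : α} {x : β} (hx : ∀ i, i ≠ i0 → c i ≠ x) :
    Function.Injective (Function.update c i0 x) := by
  intro i i' h
  by_cases hi : i = i0 <;> by_cases hi' : i' = i0
  · rw [hi, hi']
  · exfalso
    rw [hi, Function.update_self, Function.update_of_ne hi'] at h
    exact hx i' hi' h.symm
  · exfalso
    rw [hi', Function.update_self, Function.update_of_ne hi] at h
    exact hx i hi h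
  · rw [Function.update_of_ne hi, Function.update_of_ne hi'] at h; exact hc h

lemma MAPD.getVert_mem_support {V : Type*} {G : SimpleGraph V} {u v : V}
    (W : G.Walk u v) (k : ℕ) : W.getVert k ∈ W.support := by
  rcases le_or_gt k W.length with h | h
  · exact SimpleGraph.Walk.mem_support_iff_exists_getVert.2 ⟨k, rfl, h⟩
  · rw [W.getVert_of_length_le h.le]; exact W.end_mem_support

/-- Extend plans settled at configuration `c` from time `T` by letting agent `i0`
walk along `W` (whose support avoids all other agents). -/
lemma MAPD.step {V : Type*} {G : SimpleGraph V} {m : ℕ}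
    (p : Fin m → ℕ → V) (T : ℕ) (c : Fin m → V)
    (hplan : ∀ i, IsPlan G (p i))
    (hcol : ∀ i i', i ≠ i' → ¬ Collide (p i) (p i'))
    (hsettle : ∀ i t, T ≤ t → p i t = c i)
    (i0 : Fin m) {x : V} (W : G.Walk (c i0) x)
    (hW : ∀ i, i ≠ i0 → c i ∉ W.support) :
    ∃ p' : Fin m → ℕ → V,
      (∀ i, IsPlan G (p' i)) ∧
      (∀ i i', i ≠ i' → ¬ Collide (p' i) (p' i')) ∧
      (∀ i t, t ≤ T → p' i t = p i t) ∧
      (∀ i t, T + W.length ≤ t → p' i t = Function.update c i0 x i) := by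
  classical
  set p' : Fin m → ℕ → V := fun i t =>
    if i = i0 then (if t ≤ T then p i0 t else W.getVert (t - T)) else p i t with hp'
  have hme : ∀ t, t ≤ T → p' i0 t = p i0 t := by
    intro t ht; simp [hp', ht]
  have hA : ∀ t, T ≤ t → p' i0 t = W.getVert (t - T) := by
    intro t ht
    simp only [hp', if_pos rfl]
    rcases eq_or_lt_of_le ht with h | h
    · rw [if_pos h.symm.le, ← h, Nat.sub_self, SimpleGraph.Walk.getVert_zero,
        hsettle i0 T le_rfl]
    · rw [if_neg (by omega)]
  have hother : ∀ i, i ≠ i0 → ∀ t, p' i t = p i t := by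
    intro i hi t; simp only [hp', if_neg hi]
  have hsup : ∀ t, T ≤ t → p' i0 t ∈ W.support := by
    intro t ht; rw [hA t ht]; exact MAPD.getVert_mem_support W _
  have hist : ∀ i t, t ≤ T → p' i t = p i t := by
    intro i t ht
    by_cases hi : i = i0
    · rw [hi]; exact hme t ht
    · exact hother i hi t
  have key : ∀ i', i' ≠ i0 → ¬ Collide (p' i0) (p' i') := by
    intro i' hi' hc
    rcases hc with ⟨t, ht⟩ | ⟨t, ht1, ht2⟩
    · rcases le_or_gt t T with h | h
      · exact hcol i0 i' (fun he => hi' he.symm)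
          (Or.inl ⟨t, by rw [← hme t h, ← hother i' hi' t, ht]⟩)
      · have := hsup t h.le
        rw [ht, hother i' hi' t, hsettle i' t h.le] at this
        exact hW i' hi' this
    · rcases le_or_gt (t + 1) T with h | h
      · refine hcol i0 i' (fun he => hi' he.symm) (Or.inr ⟨t, ?_, ?_⟩)
        · rw [← hme t (Nat.le_of_succ_le h), ← hother i' hi' (t + 1), ht1]
        · rw [← hother i' hi' t, ← hme (t + 1) h, ht2]
      · have hTt : T ≤ t := by omega
        have := hsup t hTt
        rw [ht1, hother i' hi' (t + 1), hsettle i' (t + 1) (by omega)] at this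
        exact hW i' hi' this
  refine ⟨p', ?_, ?_, hist, ?_⟩
  · -- plans
    intro i t
    by_cases hi : i = i0
    · rw [hi]
      rcases le_or_gt (t + 1) T with ht | ht
      · rw [hme (t + 1) ht, hme t (Nat.le_of_succ_le ht)]; exact hplan i0 t
      · have hTt : T ≤ t := by omega
        rw [hA t hTt, hA (t + 1) (by omega)]
        have heq : t + 1 - T = (t - T) + 1 := by omega
        rw [heq]
        rcases lt_or_ge (t - T) W.length with h | h
        · exact Or.inr (W.adj_getVert_succ h)
        · rw [W.getVert_of_length_le h, W.getVert_of_length_le (by omega)]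
          exact Or.inl rfl
    · rw [hother i hi, hother i hi]; exact hplan i t
  · -- no collisions
    intro i i' hne hc
    by_cases hi : i = i0
    · exact key i' (fun he => hne (hi.trans he.symm)) (hi ▸ hc)
    · by_cases hi' : i' = i0
      · exact key i hi (hi' ▸ MAPD.collide_symm hc)
      · rw [hp'] at hc; simp only [if_neg hi, if_neg hi'] at hc
        exact hcol i i' hne hc
  · -- new settle
    intro i t ht
    by_cases hi : i = i0
    · rw [hi, hA t (by omega), Function.update_self,
        W.getVert_of_length_le (by omega)]
    · rw [hother i hi t, Function.update_of_ne hi, hsettle i t (by omega)]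

/-- There is a free parking spot in `S` avoided by all agents other than `i0`. -/
lemma MAPD.free_spot {V : Type*} {m : ℕ} (c : Fin m → V) (hc : Function.Injective c)
    (i0 : Fin m) {S : Set V} (hSfin : S.Finite) (h : m ≤ S.ncard) :
    ∃ x ∈ S, ∀ i, i ≠ i0 → c i ≠ x := by
  classical
  set F := hSfin.toFinset with hF
  set I := (Finset.univ.erase i0).image c with hI
  have hm : 0 < m := i0.pos
  have hIcard : I.card < F.card := by
    have h1 : I.card ≤ m - 1 := by
      calc I.card ≤ (Finset.univ.erase i0).card := Finset.card_image_le
        _ = m - 1 := by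
            rw [Finset.card_erase_of_mem (Finset.mem_univ _), Finset.card_univ,
              Fintype.card_fin]
    have h2 : F.card = S.ncard := by
      rw [Set.ncard_eq_toFinset_card S hSfin]
    omega
  have : ¬ F ⊆ I := fun hsub => absurd (Finset.card_le_card hsub) (not_le.2 hIcard)
  obtain ⟨x, hxF, hxI⟩ := Finset.not_subset.1 this
  refine ⟨x, hSfin.mem_toFinset.1 hxF, fun i hi hix => hxI ?_⟩
  exact Finset.mem_image.2 ⟨i, Finset.mem_erase.2 ⟨hi, Finset.mem_univ _⟩, hix⟩

/-- Move agent `i0` (all others parked in `S`) to a task endpoint `y`, starting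
no earlier than `T'`. -/
lemma MAPD.move0 {V : Type*} {G : SimpleGraph V} {m : ℕ}
    {Vtsk S : Set V} (hdisj : Disjoint S Vtsk)
    (hwalk : ∀ x ∈ S ∪ Vtsk, ∀ y ∈ S ∪ Vtsk, x ≠ y →
      ∃ W : G.Walk x y, {u | u ∈ W.support} ∩ (S ∪ Vtsk) = {x, y})
    (p : Fin m → ℕ → V) (T : ℕ) (c : Fin m → V) (i0 : Fin m)
    (hplan : ∀ i, IsPlan G (p i))
    (hcol : ∀ i i', i ≠ i' → ¬ Collide (p i) (p i'))
    (hsettle : ∀ i t, T ≤ t → p i t = c i)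
    (hcinj : Function.Injective c)
    (hcS : ∀ i, i ≠ i0 → c i ∈ S)
    (hc0 : c i0 ∈ S ∪ Vtsk)
    {y : V} (hy : y ∈ Vtsk)
    (T' : ℕ) (hT' : T ≤ T') :
    ∃ (p' : Fin m → ℕ → V) (T'' : ℕ),
      (∀ i, IsPlan G (p' i)) ∧
      (∀ i i', i ≠ i' → ¬ Collide (p' i) (p' i')) ∧
      (∀ i t, t ≤ T' → p' i t = p i t) ∧
      T' ≤ T'' ∧
      (∀ i t, T'' ≤ t → p' i t = Function.update c i0 y i) ∧
      Function.Injective (Function.update c i0 y) := by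
  classical
  have hx : ∀ i, i ≠ i0 → c i ≠ y := fun i hi hiy =>
    Set.disjoint_left.1 hdisj (hcS i hi) (hiy ▸ hy)
  have hinj' : Function.Injective (Function.update c i0 y) :=
    MAPD.update_inj hcinj hx
  have hsettle' : ∀ i t, T' ≤ t → p i t = c i := fun i t ht =>
    hsettle i t (le_trans hT' ht)
  by_cases hcy : c i0 = y
  · refine ⟨p, T', hplan, hcol, fun i t _ => rfl, le_rfl, ?_, hinj'⟩
    intro i t ht
    rw [hsettle' i t ht]
    by_cases hi : i = i0
    · rw [hi, Function.update_self, hcy]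
    · rw [Function.update_of_ne hi]
  · obtain ⟨W, hWsupp⟩ := hwalk (c i0) hc0 y (Or.inr hy) hcy
    have hW : ∀ i, i ≠ i0 → c i ∉ W.support := by
      intro i hi hmem
      have : c i ∈ ({c i0, y} : Set V) := by
        rw [← hWsupp]; exact ⟨hmem, Or.inl (hcS i hi)⟩
      rcases this with h | h
      · exact hi (hcinj h)
      · exact hx i hi h
    obtain ⟨p', hplan', hcol', hist', hsettle''⟩ :=
      MAPD.step p T' c hplan hcol hsettle' i0 W hW
    exact ⟨p', T' + W.length, hplan', hcol', hist', Nat.le_add_right _ _,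
      hsettle'', hinj'⟩

/-- Theorem 1 of the paper: all well-formed MAPD instances are solvable.
`m ≥ 1` agents start at pairwise-distinct locations `a i`; there are `n` tasks
with pickup locations `s j`, delivery locations `g j`, and release timesteps
`r j`; the task endpoints `Vtsk` contain all pickup and delivery locations;
the non-task endpoints `S` are disjoint from `Vtsk`, finite, with `|S| ≥ m`;
the endpoints `S ∪ Vtsk` contain all initial locations; and any two distinct
endpoints are joined by a walk whose support meets the endpoints exactly in
those two vertices. Then there are pairwise non-colliding plans starting at the
initial locations such that every task is executed after its release. -/
theorem wellFormed_MAPD_solvable {V : Type*} (G : SimpleGraph V)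
    (hconn : G.Connected)
    (m : ℕ) (hm : 1 ≤ m) (a : Fin m → V) (ha : Function.Injective a)
    (n : ℕ) (s g : Fin n → V) (r : Fin n → ℕ)
    (Vtsk S : Set V)
    (hs : ∀ j, s j ∈ Vtsk) (hg : ∀ j, g j ∈ Vtsk)
    (hdisj : Disjoint S Vtsk)
    (hinit : ∀ i, a i ∈ S ∪ Vtsk)
    (hSfin : S.Finite) (hScard : m ≤ S.ncard)
    (hwalk : ∀ x ∈ S ∪ Vtsk, ∀ y ∈ S ∪ Vtsk, x ≠ y →
      ∃ W : G.Walk x y, {u | u ∈ W.support} ∩ (S ∪ Vtsk) = {x, y}) :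
    ∃ p : Fin m → ℕ → V,
      (∀ i, IsPlan G (p i)) ∧
      (∀ i, p i 0 = a i) ∧
      (∀ i i', i ≠ i' → ¬ Collide (p i) (p i')) ∧
      (∀ j : Fin n, ∃ (i : Fin m) (t1 t2 : ℕ),
        t1 ≤ t2 ∧ r j ≤ t1 ∧ p i t1 = s j ∧ p i t2 = g j) := by
  classical
  have hm0 : 0 < m := hm
  set i0 : Fin m := ⟨0, hm0⟩ with hi0
  -- Phase 1: park the first k agents on distinct vertices of S, one at a time.
  have phase1 : ∀ k, k ≤ m → ∃ (p : Fin m → ℕ → V) (T : ℕ) (c : Fin m → V),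
      (∀ i, IsPlan G (p i)) ∧ (∀ i, p i 0 = a i) ∧
      (∀ i i', i ≠ i' → ¬ Collide (p i) (p i')) ∧
      (∀ i t, T ≤ t → p i t = c i) ∧ Function.Injective c ∧
      (∀ i : Fin m, (i : ℕ) < k → c i ∈ S) ∧
      (∀ i : Fin m, k ≤ (i : ℕ) → c i = a i) := by
    intro k
    induction k with
    | zero =>
      intro _
      refine ⟨fun i _ => a i, 0, a, fun i t => Or.inl rfl, fun i => rfl, ?_,
        fun i t _ => rfl, ha, fun i h => absurd h (Nat.not_lt_zero _), fun i _ => rfl⟩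
      intro i i' hne hc
      rcases hc with ⟨t, ht⟩ | ⟨t, h1, h2⟩
      · exact hne (ha ht)
      · exact hne (ha h1)
    | succ k ih =>
      intro hk1
      obtain ⟨p, T, c, hplan, hinit0, hcol, hsettle, hcinj, hcS, hca⟩ := ih (by omega)
      set ik : Fin m := ⟨k, by omega⟩ with hik
      obtain ⟨x, hxS, hxfree⟩ := MAPD.free_spot c hcinj ik hSfin hScard
      by_cases hcx : c ik = x
      · refine ⟨p, T, c, hplan, hinit0, hcol, hsettle, hcinj, ?_, ?_⟩
        · intro i hi
          rcases Nat.lt_succ_iff_lt_or_eq.1 hi with h | h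
          · exact hcS i h
          · have hieq : i = ik := Fin.ext h
            rw [hieq, hcx]; exact hxS
        · intro i hi; exact hca i (by omega)
      · have hcEp : c ik ∈ S ∪ Vtsk := by rw [hca ik le_rfl]; exact hinit ik
        obtain ⟨W, hWsupp⟩ := hwalk (c ik) hcEp x (Or.inl hxS) hcx
        have hW : ∀ i, i ≠ ik → c i ∉ W.support := by
          intro i hi hmem
          have hEp : c i ∈ S ∪ Vtsk := by
            rcases lt_or_ge (i : ℕ) k with h | h
            · exact Or.inl (hcS i h)
            · rw [hca i h]; exact hinit i
          have hmem2 : c i ∈ ({c ik, x} : Set V) := by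
            rw [← hWsupp]; exact ⟨hmem, hEp⟩
          rcases hmem2 with h | h
          · exact hi (hcinj h)
          · exact hxfree i hi h
        obtain ⟨p', hplan', hcol', hist', hsettle'⟩ :=
          MAPD.step p T c hplan hcol hsettle ik W hW
        refine ⟨p', T + W.length, Function.update c ik x, hplan', ?_, hcol',
          hsettle', MAPD.update_inj hcinj hxfree, ?_, ?_⟩
        · intro i; rw [hist' i 0 (Nat.zero_le _)]; exact hinit0 i
        · intro i hi
          by_cases h : i = ik
          · rw [h, Function.update_self]; exact hxS
          · rw [Function.update_of_ne h]
            have hik' : (i : ℕ) ≠ k := fun hh => h (Fin.ext hh)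
            exact hcS i (by omega)
        · intro i hi
          have h : i ≠ ik := by
            intro hh
            rw [hh] at hi
            simp only [hik] at hi
            omega
          rw [Function.update_of_ne h]; exact hca i (by omega)
  obtain ⟨p0, T0, c0, hplan0, hinit0, hcol0, hsettle0, hcinj0, hcS0, _⟩ :=
    phase1 m le_rfl
  have hc0S : ∀ i, c0 i ∈ S := fun i => hcS0 i i.2
  -- Phase 2: agent i0 executes tasks 0..k-1 in order.
  have phase2 : ∀ k, k ≤ n → ∃ (p : Fin m → ℕ → V) (T : ℕ) (c : Fin m → V),
      (∀ i, IsPlan G (p i)) ∧ (∀ i, p i 0 = a i) ∧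
      (∀ i i', i ≠ i' → ¬ Collide (p i) (p i')) ∧
      (∀ i t, T ≤ t → p i t = c i) ∧ Function.Injective c ∧
      (∀ i, i ≠ i0 → c i ∈ S) ∧ (c i0 ∈ S ∪ Vtsk) ∧
      (∀ j : Fin n, (j : ℕ) < k → ∃ t1 t2, t1 ≤ t2 ∧ t2 ≤ T ∧ r j ≤ t1 ∧
        p i0 t1 = s j ∧ p i0 t2 = g j) := by
    intro k
    induction k with
    | zero =>
      intro _
      exact ⟨p0, T0, c0, hplan0, hinit0, hcol0, hsettle0, hcinj0,
        fun i _ => hc0S i, Or.inl (hc0S i0), fun j hj => absurd hj (Nat.not_lt_zero _)⟩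
    | succ k ih =>
      intro hk1
      obtain ⟨p, T, c, hplan, hinitp, hcol, hsettle, hcinj, hcS, hc0, hdone⟩ :=
        ih (by omega)
      set jk : Fin n := ⟨k, by omega⟩ with hjk
      -- first hop: go pick up at s jk, starting no earlier than max T (r jk)
      obtain ⟨p1, T1, hplan1, hcol1, hist1, hle1, hsettle1, hinj1⟩ :=
        MAPD.move0 hdisj hwalk p T c i0 hplan hcol hsettle hcinj hcS hc0
          (hs jk) (max T (r jk)) (le_max_left _ _)
      set c1 : Fin m → V := Function.update c i0 (s jk) with hc1
      have hcS1 : ∀ i, i ≠ i0 → c1 i ∈ S := by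
        intro i hi; rw [hc1, Function.update_of_ne hi]; exact hcS i hi
      have hc01 : c1 i0 = s jk := by rw [hc1, Function.update_self]
      -- second hop: deliver at g jk
      obtain ⟨p2, T2, hplan2, hcol2, hist2, hle2, hsettle2, hinj2⟩ :=
        MAPD.move0 hdisj hwalk p1 T1 c1 i0 hplan1 hcol1 hsettle1 hinj1 hcS1
          (hc01 ▸ Or.inr (hs jk)) (hg jk) T1 le_rfl
      set c2 : Fin m → V := Function.update c1 i0 (g jk) with hc2
      have hTle : T ≤ max T (r jk) := le_max_left _ _
      have hT1 : max T (r jk) ≤ T1 := hle1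
      refine ⟨p2, T2, c2, hplan2, ?_, hcol2, hsettle2, hinj2, ?_, ?_, ?_⟩
      · intro i
        rw [hist2 i 0 (Nat.zero_le _), hist1 i 0 (Nat.zero_le _)]
        exact hinitp i
      · intro i hi; rw [hc2, Function.update_of_ne hi]; exact hcS1 i hi
      · rw [hc2, Function.update_self]; exact Or.inr (hg jk)
      · intro j hj
        rcases Nat.lt_succ_iff_lt_or_eq.1 hj with h | h
        · obtain ⟨t1, t2, h12, h2T, hr, hs1, hg1⟩ := hdone j h
          refine ⟨t1, t2, h12, le_trans h2T (le_trans hTle (le_trans hT1 hle2)),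
            hr, ?_, ?_⟩
          · rw [hist2 _ _ (le_trans (le_trans h12 h2T) (le_trans hTle hT1)),
              hist1 _ _ (le_trans (le_trans h12 h2T) hTle)]
            exact hs1
          · rw [hist2 _ _ (le_trans h2T (le_trans hTle hT1)),
              hist1 _ _ (le_trans h2T hTle)]
            exact hg1
        · have hjeq : j = jk := Fin.ext h
          refine ⟨T1, T2, hle2, le_rfl, ?_, ?_, ?_⟩
          · exact le_trans (le_max_right T (r j)) (by rw [hjeq]; exact hT1)
          · rw [hist2 _ _ le_rfl, hsettle1 i0 T1 le_rfl, hjeq]; exact hc01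
          · rw [hsettle2 i0 T2 le_rfl, hjeq, hc2, Function.update_self]
      -- (end phase2)
  obtain ⟨p, T, c, hplan, hinitp, hcol, hsettle, _, _, _, hdone⟩ := phase2 n le_rfl
  refine ⟨p, hplan, hinitp, hcol, ?_⟩
  intro j
  obtain ⟨t1, t2, h12, _, hr, hs1, hg1⟩ := hdone j j.2
  exact ⟨i0, t1, t2, h12, hr, hs1, hg1⟩
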